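/- Let N = (ΛΛᵀ + t tᵀ)/2 and M = (ΛΛᵀ + 5 t tᵀ)/2 for a 3×3 real matrix Λ and t ∈ ℝ³. Then the sum of the two smallest eigenvalues of N equals the sum of the two smallest eigenvalues of M if t = 0, or if t is an eigenvector of N corresponding to its largest eigenvalue. -/

import Mathlib

open Matrix

/-! Adding `c • t tᵀ` (with `c ≥ 0`) to `N` raises the trace by `c ‖t‖²`. When `t` is an
eigenvector for the top eigenvalue `ν₀` of `N`, it also raises the top eigenvalue by exactly
`c ‖t‖²`: `t` (or, if `t = 0`, any top eigenvector of `N`) is an eigenvector of the updated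
matrix for `ν₀ + c ‖t‖²`, and by Cauchy–Schwarz no Rayleigh quotient exceeds that value.
Subtracting, the sum of the two smallest eigenvalues is unchanged. -/

/-- `μ` lists the eigenvalues of the real symmetric 3×3 matrix `M` in nonincreasing
order, via an orthogonal diagonalization `M = Oᵀ (diag μ) O`. -/
def EigOrdered (M : Matrix (Fin 3) (Fin 3) ℝ) (μ : Fin 3 → ℝ) : Prop :=
  (∃ O : Matrix (Fin 3) (Fin 3) ℝ, Oᵀ * O = 1 ∧ M = Oᵀ * Matrix.diagonal μ * O) ∧
  μ 1 ≤ μ 0 ∧ μ 2 ≤ μ 1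

section DotProduct

variable {n : Type*} [Fintype n]

lemma sq_dotProduct_le (a b : n → ℝ) : (a ⬝ᵥ b) ^ 2 ≤ (a ⬝ᵥ a) * (b ⬝ᵥ b) := by
  simpa only [dotProduct, sq] using Finset.sum_mul_sq_le_sq_mul_sq Finset.univ a b

lemma dotProduct_self_pos {x : n → ℝ} (hx : x ≠ 0) : 0 < x ⬝ᵥ x := by
  simpa using dotProduct_self_star_pos_iff.2 hx

variable {R : Type*} [CommRing R]

lemma mulVec_add_smul_vecMulVec (N : Matrix n n R) (c : R) (t x : n → R) :
    (N + c • vecMulVec t t) *ᵥ x = N *ᵥ x + (c * (t ⬝ᵥ x)) • t := by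
  ext i
  simp [add_mulVec, smul_mulVec, vecMulVec_mulVec, mul_assoc, mul_comm (t ⬝ᵥ x)]

lemma dotProduct_mulVec_add_smul_vecMulVec (N : Matrix n n R) (c : R) (t x : n → R) :
    x ⬝ᵥ (N + c • vecMulVec t t) *ᵥ x = x ⬝ᵥ N *ᵥ x + c * (t ⬝ᵥ x) ^ 2 := by
  rw [mulVec_add_smul_vecMulVec, dotProduct_add, dotProduct_smul, dotProduct_comm x t,
    smul_eq_mul]
  ring

lemma dotProduct_mulVec_transpose_mul_mul (O A : Matrix n n R) (x : n → R) :
    x ⬝ᵥ (Oᵀ * A * O) *ᵥ x = (O *ᵥ x) ⬝ᵥ A *ᵥ (O *ᵥ x) := by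
  rw [← mulVec_mulVec, ← mulVec_mulVec, dotProduct_mulVec, vecMul_transpose]

lemma dotProduct_self_mulVec_of_transpose_mul_self [DecidableEq n] {O : Matrix n n R}
    (hO : Oᵀ * O = 1) (x : n → R) : (O *ᵥ x) ⬝ᵥ (O *ᵥ x) = x ⬝ᵥ x := by
  simpa [hO] using (dotProduct_mulVec_transpose_mul_mul O 1 x).symm

end DotProduct

namespace EigOrdered

variable {A : Matrix (Fin 3) (Fin 3) ℝ} {μ : Fin 3 → ℝ}

lemma apply_le_apply_zero (h : EigOrdered A μ) (i : Fin 3) : μ i ≤ μ 0 := by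
  obtain ⟨-, h10, h21⟩ := h
  fin_cases i <;> dsimp <;> linarith

lemma trace_eq (h : EigOrdered A μ) : A.trace = μ 0 + μ 1 + μ 2 := by
  obtain ⟨⟨O, hO, rfl⟩, -⟩ := h
  rw [trace_mul_cycle, mul_eq_one_comm.mp hO, one_mul, trace_diagonal, Fin.sum_univ_three]

lemma dotProduct_mulVec_le (h : EigOrdered A μ) (x : Fin 3 → ℝ) :
    x ⬝ᵥ A *ᵥ x ≤ μ 0 * (x ⬝ᵥ x) := by
  have hle := h.apply_le_apply_zero
  obtain ⟨⟨O, hO, rfl⟩, -⟩ := h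
  rw [dotProduct_mulVec_transpose_mul_mul, ← dotProduct_self_mulVec_of_transpose_mul_self hO x]
  simp only [dotProduct, mulVec_diagonal, Finset.mul_sum]
  exact Finset.sum_le_sum fun i _ => by nlinarith [hle i, mul_self_nonneg ((O *ᵥ x) i)]

lemma exists_unit_eigenvector (h : EigOrdered A μ) :
    ∃ u : Fin 3 → ℝ, u ⬝ᵥ u = 1 ∧ A *ᵥ u = μ 0 • u := by
  obtain ⟨⟨O, hO, rfl⟩, -⟩ := h
  have hO' : Oᵀᵀ * Oᵀ = 1 := by rw [transpose_transpose, mul_eq_one_comm.mp hO]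
  have hdiag : diagonal μ *ᵥ Pi.single 0 1 = μ 0 • Pi.single 0 1 := by
    ext i
    rcases eq_or_ne i 0 with rfl | hi <;> simp [mulVec_diagonal, *]
  refine ⟨Oᵀ *ᵥ Pi.single 0 1, by rw [dotProduct_self_mulVec_of_transpose_mul_self hO']; simp, ?_⟩
  have hcancel : O *ᵥ (Oᵀ *ᵥ Pi.single 0 1) = Pi.single 0 1 := by
    rw [mulVec_mulVec, mul_eq_one_comm.mp hO, one_mulVec]
  rw [← mulVec_mulVec, ← mulVec_mulVec, hcancel, hdiag, mulVec_smul]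

lemma le_apply_zero_of_mulVec_eq_smul (h : EigOrdered A μ) {a : ℝ} {x : Fin 3 → ℝ} (hx : x ≠ 0)
    (hax : A *ᵥ x = a • x) : a ≤ μ 0 := by
  have hray := h.dotProduct_mulVec_le x
  rw [hax, dotProduct_smul, smul_eq_mul] at hray
  exact le_of_mul_le_mul_right hray (dotProduct_self_pos hx)

lemma apply_zero_eq_of_add_smul_vecMulVec {N : Matrix (Fin 3) (Fin 3) ℝ} {ν : Fin 3 → ℝ} {c : ℝ}
    {t : Fin 3 → ℝ} (hc : 0 ≤ c) (hν : EigOrdered N ν)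
    (hμ : EigOrdered (N + c • vecMulVec t t) μ) (ht : N *ᵥ t = ν 0 • t) :
    μ 0 = ν 0 + c * (t ⬝ᵥ t) := by
  apply le_antisymm
  · obtain ⟨u, hu, hMu⟩ := hμ.exists_unit_eigenvector
    have hμ0 : u ⬝ᵥ (N + c • vecMulVec t t) *ᵥ u = μ 0 := by
      rw [hMu, dotProduct_smul, hu, smul_eq_mul, mul_one]
    have hNu := hν.dotProduct_mulVec_le u
    have hcs := sq_dotProduct_le t u
    rw [hu, mul_one] at hNu hcs
    rw [← hμ0, dotProduct_mulVec_add_smul_vecMulVec]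
    nlinarith
  · rcases eq_or_ne t 0 with rfl | ht0
    · obtain ⟨v, hv, hNv⟩ := hν.exists_unit_eigenvector
      refine hμ.le_apply_zero_of_mulVec_eq_smul (x := v) (fun hv0 => by simp [hv0] at hv) ?_
      simp [hNv]
    · refine hμ.le_apply_zero_of_mulVec_eq_smul ht0 ?_
      rw [mulVec_add_smul_vecMulVec, ht, add_smul]

end EigOrdered

/-- For `N = (ΛΛᵀ + ttᵀ)/2` and `M = (ΛΛᵀ + 5ttᵀ)/2`, the sums of the two
smallest eigenvalues of `N` and `M` coincide if `t = 0` or if `t` is an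
eigenvector of `N` for its largest eigenvalue. -/
theorem stmt9 (Λ : Matrix (Fin 3) (Fin 3) ℝ) (t : Fin 3 → ℝ)
    (N M : Matrix (Fin 3) (Fin 3) ℝ)
    (hNdef : N = (1/2 : ℝ) • (Λ * Λᵀ + vecMulVec t t))
    (hMdef : M = (1/2 : ℝ) • (Λ * Λᵀ + (5 : ℝ) • vecMulVec t t))
    (ν μ : Fin 3 → ℝ) (hν : EigOrdered N ν) (hμ : EigOrdered M μ)
    (h : t = 0 ∨ (t ≠ 0 ∧ N.mulVec t = ν 0 • t)) :
    ν 1 + ν 2 = μ 1 + μ 2 := by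
  have hM : M = N + (2 : ℝ) • vecMulVec t t := by
    rw [hNdef, hMdef]
    module
  have ht : N *ᵥ t = ν 0 • t := h.elim (fun ht0 => by simp [ht0]) And.right
  have htop := hν.apply_zero_eq_of_add_smul_vecMulVec zero_le_two (hM ▸ hμ) ht
  have htrace : M.trace = N.trace + 2 * (t ⬝ᵥ t) := by
    rw [hM, trace_add, trace_smul, trace_vecMulVec, smul_eq_mul]
  linarith [hν.trace_eq, hμ.trace_eq]
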